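/- arXiv:1802.07817 — 2 statements merged into one kernel-verified Lean document; each statement's English description precedes it below -/
import Mathlib

section
/- Sequential consistency length mechanism (property S3): if a client records the length ℓ at which its appended record r was placed (r is at index ℓ−1 of the server's sequence), and later receives from any server a sequence V with |V| ≥ ℓ, where all server sequences are dedup folds over prefixes of a common delivery order, then r ∈ V. -/
def dedupFold {α : Type} [DecidableEq α] (D : List α) : List α :=
  D.foldl (fun acc r => if r ∈ acc then acc else acc ++ [r]) []

/-! A dedup fold only ever appends, so folds of prefixes of one delivery list `D` are all prefixes
of `dedupFold D`, and two prefixes of a common list agree at every index where both are defined. -/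

theorem List.prefix_foldl {α β : Type*} {f : List α → β → List α}
    (hf : ∀ acc x, acc <+: f acc x) : ∀ (L : List β) (acc : List α), acc <+: L.foldl f acc
  | [], acc => List.prefix_refl acc
  | x :: L, acc => (hf acc x).trans (List.prefix_foldl hf L (f acc x))

theorem List.IsPrefix.getElem?_eq {α : Type*} {l₁ l₂ : List α} (h : l₁ <+: l₂) {i : ℕ}
    (hi : i < l₁.length) : l₂[i]? = l₁[i]? := by
  rw [List.getElem?_eq_getElem hi]
  exact List.prefix_iff_getElem?.mp h i hi

theorem List.getElem?_eq_some_of_prefix_of_prefix {α : Type*} {l₁ l₂ l : List α}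
    (h₁ : l₁ <+: l) (h₂ : l₂ <+: l) {i : ℕ} (hi : i < l₂.length) {a : α}
    (ha : l₁[i]? = some a) : l₂[i]? = some a := by
  have hi₁ : i < l₁.length := (List.getElem?_eq_some_iff.mp ha).1
  rw [← h₂.getElem?_eq hi, h₁.getElem?_eq hi₁, ha]

theorem dedupFold_prefix_of_prefix {α : Type} [DecidableEq α] {D₁ D₂ : List α}
    (h : D₁ <+: D₂) : dedupFold D₁ <+: dedupFold D₂ := by
  obtain ⟨E, rfl⟩ := h
  rw [dedupFold, dedupFold, List.foldl_append]
  refine List.prefix_foldl (fun acc x => ?_) E _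
  split_ifs
  exacts [List.prefix_refl acc, List.prefix_append acc [x]]

theorem length_mechanism_S3_general {α : Type} [DecidableEq α]
    (D : List α) (k1 k2 : ℕ) (r : α) (ℓ : ℕ) (hℓ : 1 ≤ ℓ)
    (S1 V : List α)
    (hS1 : S1 = dedupFold (D.take k1)) (hV : V = dedupFold (D.take k2))
    (hidx : S1[ℓ - 1]? = some r)
    (hlenV : ℓ ≤ V.length) :
    V[ℓ - 1]? = some r ∧ r ∈ V := by
  have hS1D : S1 <+: dedupFold D := hS1 ▸ dedupFold_prefix_of_prefix (D.take_prefix k1)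
  have hVD : V <+: dedupFold D := hV ▸ dedupFold_prefix_of_prefix (D.take_prefix k2)
  have hVr : V[ℓ - 1]? = some r :=
    List.getElem?_eq_some_of_prefix_of_prefix hS1D hVD (by omega) hidx
  exact ⟨hVr, List.mem_of_getElem? hVr⟩

theorem length_mechanism_S3 {α : Type} [DecidableEq α]
    (D : List α) (k1 k2 : ℕ) (r : α) (ℓ : ℕ) (hℓ : 1 ≤ ℓ)
    (S1 V : List α)
    (hS1 : S1 = dedupFold (D.take k1)) (hV : V = dedupFold (D.take k2))
    (hlen1 : ℓ ≤ S1.length) (hidx : S1[ℓ - 1]? = some r)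
    (hlenV : ℓ ≤ V.length) :
    V[ℓ - 1]? = some r ∧ r ∈ V :=
  length_mechanism_S3_general D k1 k2 r ℓ hℓ S1 V hS1 hV hidx hlenV
end

section
/- Sequential consistency property S4 via lengths: if gets from the same process return sequences V1 then V2, both are dedup folds over prefixes of a common delivery order, and the client enforces |V2| ≥ |V1| (by passing the length along), then V1 is a prefix of V2. -/
/-! `dedupFold` only ever appends to its accumulator, so it is monotone for the prefix order.
Hence `V1` and `V2` are both prefixes of `dedupFold D`, and of two prefixes of one list the
shorter is a prefix of the longer. -/

theorem List.prefix_foldl_of_prefix_step {α β : Type*} {f : List β → α → List β}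
    (hf : ∀ acc x, acc <+: f acc x) (l : List α) (acc : List β) : acc <+: l.foldl f acc := by
  induction l generalizing acc with
  | nil => exact List.prefix_refl acc
  | cons x xs ih => exact (hf acc x).trans (ih _)

theorem dedupFold_prefix_dedupFold {α : Type} [DecidableEq α] {l₁ l₂ : List α}
    (h : l₁ <+: l₂) : dedupFold l₁ <+: dedupFold l₂ := by
  obtain ⟨t, rfl⟩ := h
  rw [dedupFold, dedupFold, List.foldl_append]
  refine List.prefix_foldl_of_prefix_step (fun acc r => ?_) t _
  split
  · exact List.prefix_refl acc
  · exact List.prefix_append acc [r]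

theorem length_mechanism_S4 {α : Type} [DecidableEq α]
    (D : List α) (k1 k2 : ℕ) (V1 V2 : List α)
    (h1 : V1 = dedupFold (D.take k1)) (h2 : V2 = dedupFold (D.take k2))
    (hlen : V1.length ≤ V2.length) :
    V1 <+: V2 := by
  subst h1 h2
  exact List.prefix_of_prefix_length_le (dedupFold_prefix_dedupFold (D.take_prefix k1))
    (dedupFold_prefix_dedupFold (D.take_prefix k2)) hlen
end
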